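/- A uniformly recurrent bi-infinite word x over a finite alphabet A is modulo-recurrent if and only if for every finite alphabet B and every cellular automaton π : A^ℤ → B^ℤ, the word π(x) is either aperiodic or constant. -/

import Mathlib

/-!
If `x` is modulo-recurrent and a sliding image `y` of `x` is eventually `p`-periodic, uniform
recurrence carries every window of `x` into the periodic part, so `y` is `p`-periodic everywhere;
modulo recurrence then carries every window to a position divisible by `p`, so `y` is constant.

Conversely, let `T ⊆ ℤ/k` be the residues of the occurrences of a factor `w`. Uniform recurrence
gives a length `M` such that every window of length `M` contains occurrences of `w` in every class
of `T`. The automaton that records the residues, relative to the window's start, of the occurrences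
of `w` in a window therefore maps `x` to `n ↦ T - n`. This image is `k`-periodic, hence constant,
so `T` is invariant under translation and, being nonempty, is all of `ℤ/k`.
-/

open scoped ENat Classical

/-- The length-`n` factor of the bi-infinite word `x` starting at position `i`. -/
def subwordZ {A : Type*} (x : ℤ → A) (i : ℤ) (n : ℕ) : List A :=
  (List.range n).map fun j => x (i + (j : ℤ))

/-- `w` occurs in `x` at position `i`. -/
def occursAt {A : Type*} (x : ℤ → A) (w : List A) (i : ℤ) : Prop :=
  subwordZ x i w.length = w

/-- `w` is a factor of the bi-infinite word `x`. -/
def IsFactorZ {A : Type*} (x : ℤ → A) (w : List A) : Prop :=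
  ∃ i : ℤ, occursAt x w i

/-- `Γ` is a string attractor of the bi-infinite word `x`: every nonempty factor
has an occurrence crossing a position of `Γ`. -/
def IsAttractorZ {A : Type*} (x : ℤ → A) (Γ : Set ℤ) : Prop :=
  ∀ w : List A, w ≠ [] → IsFactorZ x w →
    ∃ i : ℤ, occursAt x w i ∧ ∃ p ∈ Γ, i ≤ p ∧ p < i + (w.length : ℤ)

/-- The span `sup Γ - inf Γ` of a set of integers (`⊤` when unbounded). -/
noncomputable def setSpan (Γ : Set ℤ) : ℕ∞ :=
  ⨆ a ∈ Γ, ⨆ b ∈ Γ, ((b - a).toNat : ℕ∞)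

/-- The string attractor span of a bi-infinite word. -/
noncomputable def wordSpan {A : Type*} (x : ℤ → A) : ℕ∞ :=
  ⨅ Γ ∈ {Γ : Set ℤ | IsAttractorZ x Γ}, setSpan Γ

/-- The factor complexity of a bi-infinite word. -/
noncomputable def complexityZ {A : Type*} (x : ℤ → A) (n : ℕ) : ℕ :=
  Nat.card {w : List A // w.length = n ∧ IsFactorZ x w}

/-- The shift `S^k`. -/
def shiftZ {A : Type*} (k : ℤ) (x : ℤ → A) : ℤ → A := fun i => x (i + k)

def PositivelyPeriodicZ {A : Type*} (x : ℤ → A) : Prop :=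
  ∃ (N : ℤ) (p : ℕ), 1 ≤ p ∧ ∀ n : ℤ, N ≤ n → x n = x (n + (p : ℤ))

def NegativelyPeriodicZ {A : Type*} (x : ℤ → A) : Prop :=
  ∃ (N : ℤ) (p : ℕ), 1 ≤ p ∧ ∀ n : ℤ, n ≤ N → x n = x (n - (p : ℤ))

def EventuallyPeriodicZ {A : Type*} (x : ℤ → A) : Prop :=
  PositivelyPeriodicZ x ∨ NegativelyPeriodicZ x

def AperiodicZ {A : Type*} (x : ℤ → A) : Prop := ¬ EventuallyPeriodicZ x

def PurelyPeriodicZ {A : Type*} (x : ℤ → A) : Prop :=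
  ∃ p : ℕ, 1 ≤ p ∧ ∀ n : ℤ, x n = x (n + (p : ℤ))

def LeftSpecialZ {A : Type*} (x : ℤ → A) (u : List A) : Prop :=
  ∃ a b : A, a ≠ b ∧ IsFactorZ x (a :: u) ∧ IsFactorZ x (b :: u)

def RightSpecialZ {A : Type*} (x : ℤ → A) (u : List A) : Prop :=
  ∃ a b : A, a ≠ b ∧ IsFactorZ x (u ++ [a]) ∧ IsFactorZ x (u ++ [b])

def BispecialZ {A : Type*} (x : ℤ → A) (u : List A) : Prop :=
  LeftSpecialZ x u ∧ RightSpecialZ x u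

/-- A bi-infinite word over `{0,1}` is Sturmian if it is aperiodic with complexity `n + 1`. -/
def SturmianZ (x : ℤ → Fin 2) : Prop :=
  AperiodicZ x ∧ ∀ n : ℕ, complexityZ x n = n + 1

/-- `x_{[-n, n+1]} = r_n(x) 01 l_n(x)` for all `n`. -/
def UpperCharacteristic (x : ℤ → Fin 2) : Prop :=
  SturmianZ x ∧ ∀ n : ℕ, ∃ r l : List (Fin 2),
    r.length = n ∧ RightSpecialZ x r ∧ l.length = n ∧ LeftSpecialZ x l ∧
    subwordZ x (-(n : ℤ)) (2 * n + 2) = r ++ [0, 1] ++ l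

/-- `x_{[-n, n+1]} = r_n(x) 10 l_n(x)` for all `n`. -/
def LowerCharacteristic (x : ℤ → Fin 2) : Prop :=
  SturmianZ x ∧ ∀ n : ℕ, ∃ r l : List (Fin 2),
    r.length = n ∧ RightSpecialZ x r ∧ l.length = n ∧ LeftSpecialZ x l ∧
    subwordZ x (-(n : ℤ)) (2 * n + 2) = r ++ [1, 0] ++ l

def CharacteristicSturmian (x : ℤ → Fin 2) : Prop :=
  UpperCharacteristic x ∨ LowerCharacteristic x

def QuasiSturmianZ {A : Type*} (x : ℤ → A) : Prop :=
  AperiodicZ x ∧ ∃ (n₀ k : ℕ), 1 ≤ k ∧ ∀ n : ℕ, n₀ ≤ n → complexityZ x n = n + k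

/-- Starting position in `φ(x)` of the image `φ(x_i)` (image of `x_0` starts at `0`). -/
def blockStart {A B : Type*} (φ : A → List B) (x : ℤ → A) (i : ℤ) : ℤ :=
  if 0 ≤ i then ((List.range i.toNat).map fun j => ((φ (x (j : ℤ))).length : ℤ)).sum
  else -((List.range (-i).toNat).map fun j => ((φ (x (-(j : ℤ) - 1))).length : ℤ)).sum

/-- `y` is the image of the bi-infinite word `x` under the substitution `φ`
(with images of letters nonempty). -/
def IsSubstImage {A B : Type*} (φ : A → List B) (x : ℤ → A) (y : ℤ → B) : Prop :=
  (∀ a : A, φ a ≠ []) ∧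
  ∀ i : ℤ, subwordZ y (blockStart φ x i) (φ (x i)).length = φ (x i)

/-- `φ_x(Γ)`: positions of `φ(x)` occupied by images of letters at positions in `Γ`. -/
def substSupp {A B : Type*} (φ : A → List B) (x : ℤ → A) (Γ : Set ℤ) : Set ℤ :=
  {n : ℤ | ∃ i ∈ Γ, blockStart φ x i ≤ n ∧ n < blockStart φ x i + ((φ (x i)).length : ℤ)}

/-- `φ_x^{-1}(Γ)`: positions of letters of `x` whose image blocks in `φ(x)` meet `Γ`. -/
def substPreimage {A B : Type*} (φ : A → List B) (x : ℤ → A) (Γ : Set ℤ) : Set ℤ :=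
  {i : ℤ | ∃ n ∈ Γ, blockStart φ x i ≤ n ∧ n < blockStart φ x i + ((φ (x i)).length : ℤ)}

/-- The set of occurrences of `w` in the finite word `u`. -/
def occSetF {B : Type*} (u w : List B) : Set ℕ :=
  {i : ℕ | i + w.length ≤ u.length ∧ (u.drop i).take w.length = w}

/-- `φ` is a return morphism for `w`. -/
def IsReturnMorphism {A B : Type*} (φ : A → List B) (w : List B) : Prop :=
  w ≠ [] ∧ Function.Injective φ ∧ (∀ a : A, φ a ≠ []) ∧
  ∀ a : A, occSetF (w ++ φ a) w = {0, (φ a).length}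

def listPow {A : Type*} (u : List A) : ℕ → List A
  | 0 => []
  | n + 1 => u ++ listPow u n

/-- A substitution on `{0,1}` is acyclic if `φ(0)` and `φ(1)` are not powers of one word. -/
def AcyclicSubst {A : Type*} (φ : Fin 2 → List A) : Prop :=
  ¬ ∃ (u : List A) (m n : ℕ), φ 0 = listPow u m ∧ φ 1 = listPow u n

/-- The substitution `L₀ : 0 ↦ 0, 1 ↦ 01`. -/
def Lzero : Fin 2 → List (Fin 2) := fun a => if a = 0 then [0] else [0, 1]

/-- The substitution `L₁ : 0 ↦ 10, 1 ↦ 1`. -/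
def Lone : Fin 2 → List (Fin 2) := fun a => if a = 0 then [1, 0] else [1]

/-- A finite word has period `r`. -/
def PeriodicF {A : Type*} (w : List A) (r : ℕ) : Prop :=
  ∀ i : ℕ, i + r < w.length → w[i]? = w[i + r]?

/-- `Γ` is a string attractor of the finite word `w`. -/
def IsAttractorF {A : Type*} (w : List A) (Γ : Set ℕ) : Prop :=
  ∀ u : List A, u ≠ [] → u <:+: w →
    ∃ i : ℕ, i + u.length ≤ w.length ∧ (w.drop i).take u.length = u ∧
      ∃ p ∈ Γ, i ≤ p ∧ p < i + u.length

def RecurrentZ {A : Type*} (x : ℤ → A) : Prop :=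
  ∀ w : List A, IsFactorZ x w → {i : ℤ | occursAt x w i}.Infinite

def UniformlyRecurrentZ {A : Type*} (x : ℤ → A) : Prop :=
  ∀ w : List A, IsFactorZ x w →
    ∃ n : ℕ, ∀ i : ℤ, ∃ j : ℤ, i ≤ j ∧ j + (w.length : ℤ) ≤ i + (n : ℤ) ∧ occursAt x w j

def ModuloRecurrentZ {A : Type*} (x : ℤ → A) : Prop :=
  ∀ w : List A, IsFactorZ x w → ∀ k : ℕ, 1 ≤ k → ∀ r : ℤ,
    ∃ i : ℤ, occursAt x w i ∧ (k : ℤ) ∣ (i - r)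

/-- A shift space: closed (product topology, `A` discrete) and shift-invariant. -/
def IsShiftSpace {A : Type*} (X : Set (ℤ → A)) : Prop :=
  @IsClosed _ (@Pi.topologicalSpace ℤ (fun _ => A) (fun _ => ⊥)) X ∧ shiftZ 1 '' X = X

def IsAttractorX {A : Type*} (X : Set (ℤ → A)) (Γ : Set ℤ) : Prop :=
  ∀ x ∈ X, IsAttractorZ x Γ

def MinimalShift {A : Type*} (X : Set (ℤ → A)) : Prop :=
  IsShiftSpace X ∧ ∀ Y ⊆ X, IsShiftSpace Y → Y = ∅ ∨ Y = X

/-- The orbit closure of a bi-infinite word (product topology, `A` discrete). -/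
def orbitClosureZ {A : Type*} (x : ℤ → A) : Set (ℤ → A) :=
  @closure _ (@Pi.topologicalSpace ℤ (fun _ => A) (fun _ => ⊥)) {y | ∃ k : ℤ, y = shiftZ k x}

open Function

section Windows

variable {A B : Type*} {x : ℤ → A}

def slidingImage {M : ℕ} (ψ : (Fin M → A) → B) (x : ℤ → A) : ℤ → B :=
  fun n => ψ (fun j : Fin M => x (n + (j.val : ℤ)))

def WindowEq (x : ℤ → A) (L : ℕ) (m n : ℤ) : Prop :=
  ∀ t : ℕ, t < L → x (m + t) = x (n + t)

theorem WindowEq.refl (x : ℤ → A) (L : ℕ) (n : ℤ) : WindowEq x L n n :=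
  fun _ _ => rfl

theorem WindowEq.symm {L : ℕ} {m n : ℤ} (h : WindowEq x L m n) : WindowEq x L n m :=
  fun t ht => (h t ht).symm

theorem WindowEq.shift {L L' s : ℕ} {m n : ℤ} (h : WindowEq x L m n) (hs : s + L' ≤ L) :
    WindowEq x L' (m + s) (n + s) := fun t ht => by
  simpa only [add_assoc, Nat.cast_add] using h (s + t) (by omega)

theorem WindowEq.mono {L L' : ℕ} {m n : ℤ} (h : WindowEq x L m n) (hL : L' ≤ L) :
    WindowEq x L' m n := fun t ht => h t (by omega)

theorem subwordZ_eq_map (x : ℤ → A) (i : ℤ) (n : ℕ) :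
    subwordZ x i n = (List.range n).map fun j : ℕ => x (i + j) := by
  simp only [subwordZ, List.pure_def, List.bind_eq_flatMap, ← List.map_eq_flatMap, List.map_map]
  rfl

theorem occursAt_iff_getElem {w : List A} {i : ℤ} :
    occursAt x w i ↔ ∀ (t : ℕ) (ht : t < w.length), x (i + t) = w[t] := by
  simp only [occursAt, subwordZ_eq_map, List.ext_getElem_iff, List.length_map,
    List.length_range, List.getElem_map, List.getElem_range, true_and]
  exact ⟨fun h t ht => h t ht ht, fun h t _ ht => h t ht⟩

theorem occursAt_subwordZ_iff {L : ℕ} {m n : ℤ} :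
    occursAt x (subwordZ x n L) m ↔ WindowEq x L m n := by
  simp only [occursAt, subwordZ_eq_map, List.length_map, List.length_range, List.map_inj_left,
    List.mem_range, WindowEq]

theorem occursAt_add_of_windowEq {w : List A} {L : ℕ} {a q i : ℤ} (h : WindowEq x L q a)
    (hw : occursAt x w i) (hai : a ≤ i) (hiL : i + w.length ≤ a + L) :
    occursAt x w (i + (q - a)) := by
  rw [occursAt_iff_getElem] at hw ⊢
  intro t ht
  have hq := h (i - a + t).toNat (by omega)
  rw [Int.toNat_of_nonneg (by omega)] at hq
  rw [← hw t ht, show i + (q - a) + t = q + (i - a + t) by ring, hq]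
  congr 1
  ring

theorem slidingImage_eq_of_windowEq {M : ℕ} (ψ : (Fin M → A) → B) {m n : ℤ}
    (h : WindowEq x M m n) : slidingImage ψ x m = slidingImage ψ x n :=
  congrArg ψ (funext fun j => h j j.isLt)

theorem exists_slidingImage_eq {M : ℕ} (F : ℤ → B)
    (hF : ∀ m n, WindowEq x M m n → F m = F n) :
    ∃ ψ : (Fin M → A) → B, slidingImage ψ x = F := by
  let window : ℤ → Fin M → A := fun n j => x (n + (j.val : ℤ))
  have hfac : FactorsThrough F window := fun m n h => hF m n fun t ht => congrFun h ⟨t, ht⟩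
  exact ⟨extend window F fun _ => F 0, funext fun n => hfac.extend_apply _ n⟩

theorem not_aperiodicZ_of_periodic {y : ℤ → B} {p : ℕ} (hp : 1 ≤ p) (h : Periodic y p) :
    ¬ AperiodicZ y :=
  fun hap => hap (Or.inl ⟨0, p, hp, fun n _ => (h n).symm⟩)

end Windows

section Recurrence

variable {A B : Type*} {x : ℤ → A}

theorem UniformlyRecurrentZ.exists_windowEq_within (hur : UniformlyRecurrentZ x) (L : ℕ)
    (n : ℤ) :
    ∃ R : ℕ, ∀ i : ℤ, ∃ m, i ≤ m ∧ m + L ≤ i + R ∧ WindowEq x L m n := by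
  obtain ⟨R, hR⟩ := hur (subwordZ x n L) ⟨n, occursAt_subwordZ_iff.2 (WindowEq.refl x L n)⟩
  refine ⟨R, fun i => ?_⟩
  obtain ⟨m, him, hmR, hm⟩ := hR i
  rw [subwordZ_eq_map, List.length_map, List.length_range] at hmR
  exact ⟨m, him, hmR, occursAt_subwordZ_iff.1 hm⟩

theorem UniformlyRecurrentZ.exists_windowEq_ge (hur : UniformlyRecurrentZ x) (L : ℕ)
    (n N : ℤ) : ∃ m, N ≤ m ∧ WindowEq x L m n := by
  obtain ⟨R, hR⟩ := hur.exists_windowEq_within L n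
  obtain ⟨m, hNm, -, hm⟩ := hR N
  exact ⟨m, hNm, hm⟩

theorem UniformlyRecurrentZ.exists_windowEq_le (hur : UniformlyRecurrentZ x) (L : ℕ)
    (n N : ℤ) : ∃ m, m ≤ N ∧ WindowEq x L m n := by
  obtain ⟨R, hR⟩ := hur.exists_windowEq_within L n
  obtain ⟨m, -, hmN, hm⟩ := hR (N - R)
  exact ⟨m, by omega, hm⟩

theorem ModuloRecurrentZ.exists_windowEq_dvd (hmr : ModuloRecurrentZ x) (L : ℕ) (n : ℤ)
    {k : ℕ} (hk : 1 ≤ k) (r : ℤ) : ∃ m, WindowEq x L m n ∧ (k : ℤ) ∣ m - r := by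
  obtain ⟨m, hm, hdvd⟩ := hmr _ ⟨n, occursAt_subwordZ_iff.2 (WindowEq.refl x L n)⟩ k hk r
  exact ⟨m, occursAt_subwordZ_iff.1 hm, hdvd⟩

variable {M : ℕ} (ψ : (Fin M → A) → B)

theorem periodic_slidingImage_of_windowEq {p : ℕ} {S : Set ℤ}
    (hS : ∀ j ∈ S, slidingImage ψ x (j + p) = slidingImage ψ x j)
    (hcopy : ∀ n, ∃ j ∈ S, WindowEq x (M + p) j n) : Periodic (slidingImage ψ x) p := by
  intro n
  obtain ⟨j, hjS, hj⟩ := hcopy n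
  calc slidingImage ψ x (n + p)
      = slidingImage ψ x (j + p) := slidingImage_eq_of_windowEq ψ (hj.shift (by omega)).symm
    _ = slidingImage ψ x j := hS j hjS
    _ = slidingImage ψ x n := slidingImage_eq_of_windowEq ψ (hj.mono (by omega))

theorem UniformlyRecurrentZ.periodic_slidingImage (hur : UniformlyRecurrentZ x)
    (h : EventuallyPeriodicZ (slidingImage ψ x)) :
    ∃ p : ℕ, 1 ≤ p ∧ Periodic (slidingImage ψ x) p := by
  rcases h with ⟨N, p, hp, hper⟩ | ⟨N, p, hp, hper⟩
  · refine ⟨p, hp, periodic_slidingImage_of_windowEq ψ (S := Set.Ici N)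
      (fun j hj => (hper j hj).symm) fun n => hur.exists_windowEq_ge _ n N⟩
  · refine ⟨p, hp, periodic_slidingImage_of_windowEq ψ (S := Set.Iic (N - p))
      (fun j hj => ?_) fun n => hur.exists_windowEq_le _ n _⟩
    simpa using hper (j + p) (by have := Set.mem_Iic.1 hj; omega)

theorem ModuloRecurrentZ.slidingImage_eq_of_periodic (hmr : ModuloRecurrentZ x) {p : ℕ}
    (hp : 1 ≤ p) (h : Periodic (slidingImage ψ x) p) (n : ℤ) :
    slidingImage ψ x n = slidingImage ψ x 0 := by
  obtain ⟨m, hm, d, hd⟩ := hmr.exists_windowEq_dvd M n hp 0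
  rw [sub_zero] at hd
  rw [← slidingImage_eq_of_windowEq ψ hm, hd, mul_comm]
  exact h.int_mul_eq d

theorem ModuloRecurrentZ.aperiodicZ_or_const_slidingImage (hmr : ModuloRecurrentZ x)
    (hur : UniformlyRecurrentZ x) :
    AperiodicZ (slidingImage ψ x) ∨ ∃ b, ∀ n, slidingImage ψ x n = b := by
  refine or_iff_not_imp_left.2 fun h => ?_
  obtain ⟨p, hp, hper⟩ := hur.periodic_slidingImage ψ (not_not.1 h)
  exact ⟨_, hmr.slidingImage_eq_of_periodic ψ hp hper⟩

end Recurrence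

section Residues

variable {A : Type*} {x : ℤ → A}

def occurrenceResidues (x : ℤ → A) (w : List A) (k : ℕ) : Set (ZMod k) :=
  {t | ∃ i, occursAt x w i ∧ (i : ZMod k) = t}

theorem exists_occursAt_Icc_of_mem_occurrenceResidues (w : List A) (k : ℕ) [NeZero k] :
    ∃ (a : ℤ) (L : ℕ), ∀ t ∈ occurrenceResidues x w k,
      ∃ i, occursAt x w i ∧ (i : ZMod k) = t ∧ a ≤ i ∧ i + w.length ≤ a + L := by
  choose f hf using fun t : occurrenceResidues x w k => t.2
  obtain ⟨a, ha⟩ := (Set.finite_range f).bddBelow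
  obtain ⟨b, hb⟩ := (Set.finite_range f).bddAbove
  refine ⟨a, (b + w.length - a).toNat, fun t ht => ?_⟩
  have hfa := ha (Set.mem_range_self ⟨t, ht⟩)
  have hfb := hb (Set.mem_range_self ⟨t, ht⟩)
  exact ⟨f ⟨t, ht⟩, (hf _).1, (hf _).2, hfa, by omega⟩

/-- Uniform recurrence only provides, in each window, a translate of the residues of a fixed
finite family of occurrences; a translate of a finite set that lies inside the set is all of it. -/
theorem UniformlyRecurrentZ.exists_occursAt_window (hur : UniformlyRecurrentZ x) (w : List A)
    (k : ℕ) [NeZero k] : ∃ M : ℕ, ∀ n, ∀ t ∈ occurrenceResidues x w k,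
      ∃ i, occursAt x w i ∧ (i : ZMod k) = t ∧ n ≤ i ∧ i + w.length ≤ n + M := by
  obtain ⟨a, L, hrep⟩ := exists_occursAt_Icc_of_mem_occurrenceResidues (x := x) w k
  obtain ⟨R, hR⟩ := hur.exists_windowEq_within L a
  refine ⟨R, fun n t ht => ?_⟩
  obtain ⟨q, hnq, hqR, hq⟩ := hR n
  have hmaps : Set.MapsTo (· + ((q - a : ℤ) : ZMod k)) (occurrenceResidues x w k)
      (occurrenceResidues x w k) := fun t' ht' => by
    obtain ⟨i, hi, rfl, hai, hiL⟩ := hrep t' ht'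
    exact ⟨i + (q - a), occursAt_add_of_windowEq hq hi hai hiL, by push_cast; ring⟩
  obtain ⟨t', ht', rfl⟩ := (((Set.toFinite _).injOn_iff_bijOn_of_mapsTo hmaps).1
    (add_left_injective _).injOn).surjOn ht
  obtain ⟨i, hi, rfl, hai, hiL⟩ := hrep t' ht'
  exact ⟨i + (q - a), occursAt_add_of_windowEq hq hi hai hiL, by push_cast; ring, by omega,
    by omega⟩

theorem UniformlyRecurrentZ.exists_slidingImage_eq_translate (hur : UniformlyRecurrentZ x)
    (w : List A) (k : ℕ) [NeZero k] :
    ∃ M : ℕ, 1 ≤ M ∧ ∃ ψ : (Fin M → A) → Set (ZMod k),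
      slidingImage ψ x = fun n : ℤ => {t : ZMod k | t + n ∈ occurrenceResidues x w k} := by
  obtain ⟨M, hM⟩ := hur.exists_occursAt_window w k
  have hshift : ∀ m n, WindowEq x M m n → ∀ t : ZMod k,
      t + m ∈ occurrenceResidues x w k → t + n ∈ occurrenceResidues x w k := by
    intro m n h t ht
    obtain ⟨i, hi, hit, hmi, hiM⟩ := hM m _ ht
    refine ⟨i + (n - m), occursAt_add_of_windowEq h.symm hi hmi hiM, ?_⟩
    push_cast
    rw [hit]
    ring
  refine ⟨M + 1, by omega, exists_slidingImage_eq _ fun m n h => ?_⟩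
  have h' := h.mono (Nat.le_succ M)
  exact Set.ext fun t => ⟨hshift m n h' t, hshift n m h'.symm t⟩

end Residues

theorem moduloRecurrent_iff_completely_aperiodic_general {A : Type*} (x : ℤ → A)
    (hur : UniformlyRecurrentZ x) :
    ModuloRecurrentZ x ↔
      ∀ (B : Type) (_ : Finite B) (M : ℕ), 1 ≤ M → ∀ ψ : (Fin M → A) → B,
        AperiodicZ (fun n : ℤ => ψ (fun j : Fin M => x (n + (j.val : ℤ)))) ∨
        ∃ b : B, ∀ n : ℤ, ψ (fun j : Fin M => x (n + (j.val : ℤ))) = b := by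
  refine ⟨fun hmr B _ M _ ψ => hmr.aperiodicZ_or_const_slidingImage ψ hur, fun h => ?_⟩
  rintro w ⟨i₀, hi₀⟩ k hk r
  have : NeZero k := ⟨by omega⟩
  obtain ⟨M, hM, ψ, hψ⟩ := hur.exists_slidingImage_eq_translate w k
  have hper : Periodic (slidingImage ψ x) k := fun n => by
    simp only [hψ, Int.cast_add, Int.cast_natCast, ZMod.natCast_self, add_zero]
  obtain hap | ⟨b, hb⟩ := h _ inferInstance M hM ψ
  · exact absurd hap (not_aperiodicZ_of_periodic hk hper)
  · have hr : (r : ZMod k) ∈ occurrenceResidues x w k := by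
      have h₀ : slidingImage ψ x (i₀ - r) = slidingImage ψ x 0 := (hb _).trans (hb 0).symm
      simp only [hψ, Int.cast_zero, add_zero] at h₀
      have hmem : (r : ZMod k) ∈
          {t : ZMod k | t + ((i₀ - r : ℤ) : ZMod k) ∈ occurrenceResidues x w k} :=
        ⟨i₀, hi₀, by push_cast; ring⟩
      rwa [h₀] at hmem
    obtain ⟨i, hi, hir⟩ := hr
    exact ⟨i, hi, (ZMod.intCast_eq_intCast_iff_dvd_sub _ _ _).1 hir.symm⟩

/-- A uniformly recurrent word is modulo-recurrent iff its image under every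
cellular automaton is aperiodic or constant. -/
theorem moduloRecurrent_iff_completely_aperiodic {A : Type*} [Fintype A] (x : ℤ → A)
    (hur : UniformlyRecurrentZ x) :
    ModuloRecurrentZ x ↔
      ∀ (B : Type) (_ : Finite B) (M : ℕ), 1 ≤ M → ∀ ψ : (Fin M → A) → B,
        AperiodicZ (fun n : ℤ => ψ (fun j : Fin M => x (n + (j.val : ℤ)))) ∨
        ∃ b : B, ∀ n : ℤ, ψ (fun j : Fin M => x (n + (j.val : ℤ))) = b :=
  moduloRecurrent_iff_completely_aperiodic_general x hur
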